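/- arXiv:math/0512568 — 6 statements merged into one kernel-verified Lean document; each statement's English description precedes it below -/
import Mathlib

section
/- Let S be a commutative semigroup with zero element 0, let x be a vertex of the zero-divisor graph Γ(S), and suppose x is adjacent in Γ(S) to at least one end vertex. If Γ(S) contains a cycle, then {0, x} is a sub-semigroup of S; that is, x·x = 0 or x·x = x. -/
/-!
If `x * x ∉ {0, x}`, then `x * x` is a nonzero neighbour of the end vertex `y` other than `x`,
so `x * x = y` and hence `y * y = 0`. Then every nonzero `a ∉ {x, y}` satisfies `a * y = y`,
so an edge `a — b` avoiding `x` would give `y = (a * b) * y = 0`. Thus `Γ(S)` is contained in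
the star centred at `x` and has no cycle.
-/

universe u v w
/-- A commutative semigroup with a zero element `0` satisfying `0 * a = 0`. -/
class CommSemigroupWithZero (S : Type u) extends CommSemigroup S, Zero S where
  zero_mul' : ∀ a : S, 0 * a = 0

/-- The zero-divisor graph of `S`, as a simple graph on all of `S`:
distinct nonzero `x, y` are adjacent iff `x * y = 0`.  (The element `0` and the
non-zero-divisors are isolated vertices, so adjacency, end vertices and cycles
are exactly those of `Γ(S)`.) -/
def zdGraph (S : Type u) [CommSemigroupWithZero S] : SimpleGraph S where
  Adj x y := x ≠ y ∧ x * y = 0 ∧ x ≠ 0 ∧ y ≠ 0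
  symm := ⟨by
    rintro x y ⟨h1, h2, h3, h4⟩
    exact ⟨h1.symm, by rwa [mul_comm], h4, h3⟩⟩
  loopless := ⟨fun x h => h.1 rfl⟩

/-- `x` is a vertex of `Γ(S)`: a nonzero zero-divisor. -/
def IsVertex (S : Type u) [CommSemigroupWithZero S] (x : S) : Prop :=
  x ≠ 0 ∧ ∃ y : S, y ≠ 0 ∧ x * y = 0

/-- `x` is an end vertex of `Γ(S)`: it has exactly one neighbour. -/
def IsEndVertex (S : Type u) [CommSemigroupWithZero S] (x : S) : Prop :=
  ∃! y : S, (zdGraph S).Adj x y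

namespace CommSemigroupWithZero

variable {S : Type u} [CommSemigroupWithZero S]

theorem mul_zero' (a : S) : a * 0 = 0 := by
  rw [mul_comm]
  exact zero_mul' a

end CommSemigroupWithZero

open CommSemigroupWithZero SimpleGraph

variable {S : Type u} [CommSemigroupWithZero S]

namespace IsEndVertex

variable {x y : S}

theorem eq_of_adj (hy : IsEndVertex S y) (hxy : (zdGraph S).Adj x y)
    {z : S} (hzy : (zdGraph S).Adj z y) : z = x :=
  hy.unique hzy.symm hxy.symm

theorem eq_or_eq_of_mul_eq_zero (hy : IsEndVertex S y) (hxy : (zdGraph S).Adj x y)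
    {z : S} (hz : z ≠ 0) (hzy : z * y = 0) : z = x ∨ z = y := by
  by_cases h : z = y
  · exact Or.inr h
  · exact Or.inl (hy.eq_of_adj hxy ⟨h, hzy, hz, hxy.2.2.2⟩)

theorem mul_self_eq (hy : IsEndVertex S y) (hxy : (zdGraph S).Adj x y)
    (h0 : x * x ≠ 0) (h1 : x * x ≠ x) : x * x = y := by
  have hxxy : x * x * y = 0 := by rw [mul_assoc, hxy.2.1, mul_zero']
  exact (hy.eq_or_eq_of_mul_eq_zero hxy h0 hxxy).resolve_left h1

theorem mul_eq_self_of_mul_self_eq (hy : IsEndVertex S y) (hxy : (zdGraph S).Adj x y)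
    (hxx : x * x = y) {a : S} (ha : a ≠ 0) (hax : a ≠ x) (hay : a ≠ y) : a * y = y := by
  have hay0 : a * y ≠ 0 := fun h ↦
    (hy.eq_or_eq_of_mul_eq_zero hxy ha h).elim hax hay
  have hyy : y * y = 0 :=
    calc y * y = x * (x * y) := by rw [← mul_assoc, hxx]
      _ = 0 := by rw [hxy.2.1, mul_zero']
  have hayy : a * y * y = 0 := by rw [mul_assoc, hyy, mul_zero']
  refine (hy.eq_or_eq_of_mul_eq_zero hxy hay0 hayy).resolve_left fun h ↦ hxy.2.2.2 ?_
  calc y = x * (a * y) := by rw [h, hxx]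
    _ = a * (x * y) := mul_left_comm x a y
    _ = 0 := by rw [hxy.2.1, mul_zero']

theorem zdGraph_le_starGraph (hy : IsEndVertex S y) (hxy : (zdGraph S).Adj x y)
    (hxx : x * x = y) : zdGraph S ≤ starGraph x := by
  intro a b hab
  refine starGraph_adj.mpr ⟨hab.ne, ?_⟩
  by_contra! ⟨hax, hbx⟩
  have hay : a ≠ y := fun h ↦ hbx (hy.eq_of_adj hxy (h ▸ hab).symm)
  have hby : b ≠ y := fun h ↦ hax (hy.eq_of_adj hxy (h ▸ hab))
  have ha_mul := hy.mul_eq_self_of_mul_self_eq hxy hxx hab.2.2.1 hax hay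
  have hb_mul := hy.mul_eq_self_of_mul_self_eq hxy hxx hab.2.2.2 hbx hby
  apply hxy.2.2.2
  calc y = a * (b * y) := by rw [hb_mul, ha_mul]
    _ = 0 := by rw [← mul_assoc, hab.2.1, zero_mul']

end IsEndVertex

theorem stmt2_general (S : Type u) [CommSemigroupWithZero S] (x : S)
    (hend : ∃ y : S, IsEndVertex S y ∧ (zdGraph S).Adj x y)
    (hcyc : ¬ (zdGraph S).IsAcyclic) :
    x * x = 0 ∨ x * x = x := by
  by_contra! hne
  obtain ⟨y, hy, hxy⟩ := hend
  have hxx : x * x = y := hy.mul_self_eq hxy hne.1 hne.2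
  exact hcyc ((isAcyclic_starGraph x).anti (hy.zdGraph_le_starGraph hxy hxx))

/-- Corollary 2.2 (second part): if the vertex `x` is adjacent to an end vertex and
`Γ(S)` has a cycle, then `{0, x}` is a sub-semigroup, i.e. `x * x = 0` or `x * x = x`. -/
theorem stmt2 (S : Type u) [CommSemigroupWithZero S] (x : S) (hx : IsVertex S x)
    (hend : ∃ y : S, IsEndVertex S y ∧ (zdGraph S).Adj x y)
    (hcyc : ¬ (zdGraph S).IsAcyclic) :
    x * x = 0 ∨ x * x = x :=
  stmt2_general S x hend hcyc
end

section
/- Let G₀ be the graph with vertex set {a₁, a₂, a₃, x₁, x₂} and edges a₁a₂, a₁a₃, a₂a₃, a₁x₁, a₂x₂, x₁x₂. Let U and V be disjoint (possibly empty, possibly infinite) sets disjoint from V(G₀), and let H be the graph obtained from G₀ by adjoining every u ∈ U as an end vertex adjacent to a₁ and every v ∈ V as an end vertex adjacent to a₂. Then there is exactly one binary operation · on the set V(H) ∪ {0} making it a commutative semigroup with zero element 0 whose zero-divisor graph is H, i.e., such that for distinct p, q ∈ V(H) one has p·q = 0 if and only if p and q are adjacent in H. -/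
universe u v w
/-- The edge relation of the base graph `G₀` on vertices `a₁ = 0, a₂ = 1, a₃ = 2,
x₁ = 3, x₂ = 4` (oriented version). Edges: a₁a₂, a₁a₃, a₂a₃, a₁x₁, a₂x₂, x₁x₂. -/
def eAdj (i j : Fin 5) : Prop :=
  (i = 0 ∧ j = 1) ∨ (i = 0 ∧ j = 2) ∨ (i = 1 ∧ j = 2) ∨
  (i = 0 ∧ j = 3) ∨ (i = 1 ∧ j = 4) ∨ (i = 3 ∧ j = 4)

/-- The (symmetrized) adjacency relation of `G₀`. -/
def baseAdj (i j : Fin 5) : Prop := eAdj i j ∨ eAdj j i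

/-- Adjacency of the graph `H` obtained from `G₀` by attaching every `u ∈ U` as an end
vertex adjacent to `a₁` and every `v ∈ V` as an end vertex adjacent to `a₂`. -/
def HAdj (U V : Type u) : Fin 5 ⊕ U ⊕ V → Fin 5 ⊕ U ⊕ V → Prop
  | Sum.inl i, Sum.inl j => baseAdj i j
  | Sum.inl i, Sum.inr (Sum.inl _) => i = 0
  | Sum.inl i, Sum.inr (Sum.inr _) => i = 1
  | Sum.inr (Sum.inl _), Sum.inl i => i = 0
  | Sum.inr (Sum.inr _), Sum.inl i => i = 1
  | Sum.inr _, Sum.inr _ => False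

/-!
Existence: put `T = {0, 1, 2} ⊆ ZMod 4`, so that `2 * 2 = 0`, and send
`a₁, a₂, a₃, x₁, x₂ ↦ (0,2), (2,0), (2,2), (1,0), (0,1)`, every `u ∈ U` to `(1,2)` and every
`v ∈ V` to `(2,1)`. These are the nonzero elements of the semigroup `T × T \ {(1,1)}`, and
a product of two of them is never `(1,1)`, `(1,2)` or `(2,1)`, so it can be read back as `0`
or a vertex of `G₀`; the zero products are exactly the edges of `H`.

Uniqueness: if `p, q` are distinct and not adjacent then `pq ≠ 0`, and `(pq) r = 0` whenever
`pr = 0` or `qr = 0`, so `pq` lies in the closed neighbourhood of every such `r`. In `H` the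
closed neighbourhoods of `a₁` and `x₂` meet in `{a₂, x₁}` and those of `a₁` and `a₂` in
`{a₁, a₂, a₃}`; with one more annihilation test this pins down every product, each product
found being fed into the later ones. The isomorphism `H(U, V) ≅ H(V, U)` swapping `a₁ ↔ a₂`,
`x₁ ↔ x₂` and `U ↔ V` halves the work.
-/

/-- `m` makes `Option W`, with `none` as zero, a commutative semigroup with zero whose
zero-divisor graph is `Adj`. -/
def IsZeroDivisorOperation {W : Type*} (Adj : W → W → Prop)
    (m : Option W → Option W → Option W) : Prop :=
  (∀ a b, m a b = m b a) ∧ (∀ a b c, m (m a b) c = m a (m b c)) ∧ (∀ a, m none a = none) ∧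
    ∀ p q : W, p ≠ q → (m (some p) (some q) = none ↔ Adj p q)

namespace IsZeroDivisorOperation

variable {W : Type*} {Adj : W → W → Prop} {m : Option W → Option W → Option W}

theorem mul_comm (hm : IsZeroDivisorOperation Adj m) (a b : Option W) : m a b = m b a :=
  hm.1 a b

theorem mul_assoc (hm : IsZeroDivisorOperation Adj m) (a b c : Option W) :
    m (m a b) c = m a (m b c) :=
  hm.2.1 a b c

theorem none_mul (hm : IsZeroDivisorOperation Adj m) (a : Option W) : m none a = none :=
  hm.2.2.1 a

theorem mul_none (hm : IsZeroDivisorOperation Adj m) (a : Option W) : m a none = none :=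
  (hm.mul_comm a none).trans (hm.none_mul a)

theorem mul_eq_none_iff (hm : IsZeroDivisorOperation Adj m) {p q : W} (hpq : p ≠ q) :
    m (some p) (some q) = none ↔ Adj p q :=
  hm.2.2.2 p q hpq

theorem mul_ne_none (hm : IsZeroDivisorOperation Adj m) {p q : W} (hpq : p ≠ q)
    (h : ¬Adj p q) : m (some p) (some q) ≠ none :=
  mt (hm.mul_eq_none_iff hpq).1 h

theorem eq_or_adj_of_mul_eq_none (hm : IsZeroDivisorOperation Adj m) {p q : W}
    (h : m (some p) (some q) = none) : p = q ∨ Adj p q :=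
  or_iff_not_imp_left.2 fun hpq => (hm.mul_eq_none_iff hpq).1 h

theorem mul_mul_eq_none_of_right (hm : IsZeroDivisorOperation Adj m) {a b c : Option W}
    (h : m b c = none) : m (m a b) c = none := by
  rw [hm.mul_assoc, h, hm.mul_none]

theorem mul_mul_eq_none_of_left (hm : IsZeroDivisorOperation Adj m) {a b c : Option W}
    (h : m a c = none) : m (m a b) c = none := by
  rw [hm.mul_comm a b]; exact hm.mul_mul_eq_none_of_right h

end IsZeroDivisorOperation

section Transport

variable {W W' : Type*} {Adj : W → W → Prop} {Adj' : W' → W' → Prop}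
  {m : Option W → Option W → Option W}

def transportOp (e : W ≃ W') (m : Option W → Option W → Option W) (a b : Option W') :
    Option W' :=
  (m (a.map e.symm) (b.map e.symm)).map e

theorem transportOp_map_map (e : W ≃ W') (a b : Option W) :
    transportOp e m (a.map e) (b.map e) = (m a b).map e := by
  simp [transportOp, Option.map_map]

theorem eq_of_transportOp_eq (e : W ≃ W') {a b c : Option W}
    (h : transportOp e m (a.map e) (b.map e) = c.map e) : m a b = c :=
  Option.map_injective e.injective ((transportOp_map_map e a b).symm.trans h)

theorem IsZeroDivisorOperation.transport (hm : IsZeroDivisorOperation Adj m) (e : W ≃ W')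
    (he : ∀ p q, Adj' (e p) (e q) ↔ Adj p q) :
    IsZeroDivisorOperation Adj' (transportOp e m) := by
  refine ⟨fun a b => by rw [transportOp, hm.mul_comm, transportOp], fun a b c => ?_,
    fun a => by simp [transportOp, hm.none_mul], fun p q hpq => ?_⟩
  · simp [transportOp, Option.map_map, hm.mul_assoc]
  · rw [transportOp, Option.map_some, Option.map_some, Option.map_eq_none_iff,
      hm.mul_eq_none_iff (e.symm.injective.ne hpq), ← he, e.apply_symm_apply, e.apply_symm_apply]

end Transport

section PairModel

variable {U V : Type u}

def basePair : Fin 5 → ZMod 4 × ZMod 4 := ![(0, 2), (2, 0), (2, 2), (1, 0), (0, 1)]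

def toPair : Option (Fin 5 ⊕ U ⊕ V) → ZMod 4 × ZMod 4
  | none => 0
  | some (.inl i) => basePair i
  | some (.inr (.inl _)) => (1, 2)
  | some (.inr (.inr _)) => (2, 1)

def ofPair (x : ZMod 4 × ZMod 4) : Option (Fin 5 ⊕ U ⊕ V) :=
  (Fin.find? fun i => decide (basePair i = x)).map Sum.inl

def pairMul (a b : Option (Fin 5 ⊕ U ⊕ V)) : Option (Fin 5 ⊕ U ⊕ V) :=
  ofPair (toPair a * toPair b)

def vertexPairs : Finset (ZMod 4 × ZMod 4) :=
  {0, (0, 2), (2, 0), (2, 2), (1, 0), (0, 1), (1, 2), (2, 1)}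

theorem toPair_mem_vertexPairs (a : Option (Fin 5 ⊕ U ⊕ V)) : toPair a ∈ vertexPairs := by
  rcases a with _ | i | u | v <;> simp only [toPair]
  case some.inl => revert i; decide
  all_goals decide

theorem mul_eq_zero_or_exists_basePair_eq {x y : ZMod 4 × ZMod 4} (hx : x ∈ vertexPairs)
    (hy : y ∈ vertexPairs) : x * y = 0 ∨ ∃ i, basePair i = x * y := by
  revert x y; decide

theorem basePair_ne_zero (i : Fin 5) : basePair i ≠ 0 := by
  revert i; decide

theorem toPair_eq_zero_iff {a : Option (Fin 5 ⊕ U ⊕ V)} : toPair a = 0 ↔ a = none := by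
  refine ⟨fun h => ?_, fun h => h ▸ rfl⟩
  rcases a with _ | i | u | v <;> simp only [toPair] at h
  · rfl
  · exact absurd h (basePair_ne_zero i)
  all_goals exact absurd h (by decide)

theorem toPair_ofPair {x : ZMod 4 × ZMod 4} (hx : x = 0 ∨ ∃ i, basePair i = x) :
    toPair (ofPair (U := U) (V := V) x) = x := by
  rcases hx with rfl | ⟨i, rfl⟩
  · have : ofPair (U := U) (V := V) 0 = none := by
      simpa [ofPair] using basePair_ne_zero
    rw [this]; rfl
  · cases h : Fin.find? fun j => decide (basePair j = basePair i) with
    | none => exact absurd (Fin.find?_eq_none_iff.1 h i) (by simp)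
    | some j => simpa [ofPair, h, toPair] using Fin.eq_true_of_find?_eq_some h

theorem toPair_pairMul (a b : Option (Fin 5 ⊕ U ⊕ V)) :
    toPair (pairMul a b) = toPair a * toPair b :=
  toPair_ofPair (mul_eq_zero_or_exists_basePair_eq (toPair_mem_vertexPairs a)
    (toPair_mem_vertexPairs b))

theorem toPair_mul_eq_zero_iff {p q : Fin 5 ⊕ U ⊕ V} (hpq : p ≠ q) :
    toPair (some p) * toPair (some q) = 0 ↔ HAdj U V p q := by
  rcases p with i | u | v <;> rcases q with j | u' | v' <;> (try fin_cases i) <;>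
    (try fin_cases j) <;> simp [toPair, basePair, HAdj, baseAdj, eAdj] at hpq ⊢ <;> decide

theorem isZeroDivisorOperation_pairMul : IsZeroDivisorOperation (HAdj U V) pairMul := by
  refine ⟨fun a b => by rw [pairMul, pairMul, mul_comm], fun a b c => ?_, fun a => ?_,
    fun p q hpq => ?_⟩
  · rw [pairMul, toPair_pairMul, mul_assoc, ← toPair_pairMul]; rfl
  · rw [← toPair_eq_zero_iff, toPair_pairMul]; exact zero_mul _
  · rw [← toPair_eq_zero_iff, toPair_pairMul, toPair_mul_eq_zero_iff hpq]

end PairModel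

section Uniqueness

variable {U V : Type u}
  {m : Option (Fin 5 ⊕ U ⊕ V) → Option (Fin 5 ⊕ U ⊕ V) → Option (Fin 5 ⊕ U ⊕ V)}

attribute [local simp] HAdj baseAdj eAdj

local notation "a₁" => some (Sum.inl (0 : Fin 5))
local notation "a₂" => some (Sum.inl (1 : Fin 5))
local notation "a₃" => some (Sum.inl (2 : Fin 5))
local notation "x₁" => some (Sum.inl (3 : Fin 5))
local notation "x₂" => some (Sum.inl (4 : Fin 5))

theorem HAdj.ne {p q : Fin 5 ⊕ U ⊕ V} (h : HAdj U V p q) : p ≠ q := by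
  rintro rfl
  rcases p with i | u | v
  · fin_cases i <;> simp at h
  all_goals exact h

def mirrorEquiv : Fin 5 ⊕ U ⊕ V ≃ Fin 5 ⊕ V ⊕ U :=
  Equiv.sumCongr (Equiv.swap 0 1 * Equiv.swap 3 4) (Equiv.sumComm U V)

theorem hAdj_mirrorEquiv (p q : Fin 5 ⊕ U ⊕ V) :
    HAdj V U (mirrorEquiv p) (mirrorEquiv q) ↔ HAdj U V p q := by
  rcases p with i | u | v <;> rcases q with j | u' | v' <;>
    (try fin_cases i) <;> (try fin_cases j) <;> simp [mirrorEquiv, Equiv.swap_apply_def]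

namespace IsZeroDivisorOperation

theorem mirror (hm : IsZeroDivisorOperation (HAdj U V) m) :
    IsZeroDivisorOperation (HAdj V U) (transportOp mirrorEquiv m) :=
  hm.transport mirrorEquiv hAdj_mirrorEquiv

theorem mul_eq_none_of_hAdj (hm : IsZeroDivisorOperation (HAdj U V) m) {p q : Fin 5 ⊕ U ⊕ V}
    (h : HAdj U V p q) : m (some p) (some q) = none :=
  (hm.mul_eq_none_iff h.ne).2 h

theorem mul_mul_eq_none_of_hAdj_left (hm : IsZeroDivisorOperation (HAdj U V) m)
    {p r : Fin 5 ⊕ U ⊕ V} {b : Option (Fin 5 ⊕ U ⊕ V)} (h : HAdj U V p r) :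
    m (m (some p) b) (some r) = none :=
  hm.mul_mul_eq_none_of_left (hm.mul_eq_none_of_hAdj h)

theorem mul_mul_eq_none_of_hAdj_right (hm : IsZeroDivisorOperation (HAdj U V) m)
    {q r : Fin 5 ⊕ U ⊕ V} {a : Option (Fin 5 ⊕ U ⊕ V)} (h : HAdj U V q r) :
    m (m a (some q)) (some r) = none :=
  hm.mul_mul_eq_none_of_right (hm.mul_eq_none_of_hAdj h)

theorem eq_a₂_or_x₁_of_mul_eq_none (hm : IsZeroDivisorOperation (HAdj U V) m)
    {c : Option (Fin 5 ⊕ U ⊕ V)} (hc : c ≠ none) (h₁ : m c a₁ = none) (h₂ : m c x₂ = none) :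
    c = a₂ ∨ c = x₁ := by
  obtain ⟨w, rfl⟩ := Option.ne_none_iff_exists'.1 hc
  have h₁ := hm.eq_or_adj_of_mul_eq_none h₁
  have h₂ := hm.eq_or_adj_of_mul_eq_none h₂
  rcases w with i | u | v
  · fin_cases i <;> simp_all
  all_goals simp_all

theorem eq_a₁_or_a₂_or_a₃_of_mul_eq_none (hm : IsZeroDivisorOperation (HAdj U V) m)
    {c : Option (Fin 5 ⊕ U ⊕ V)} (hc : c ≠ none) (h₁ : m c a₁ = none) (h₂ : m c a₂ = none) :
    c = a₁ ∨ c = a₂ ∨ c = a₃ := by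
  obtain ⟨w, rfl⟩ := Option.ne_none_iff_exists'.1 hc
  have h₁ := hm.eq_or_adj_of_mul_eq_none h₁
  have h₂ := hm.eq_or_adj_of_mul_eq_none h₂
  rcases w with i | u | v
  · fin_cases i <;> simp_all
  all_goals simp_all

theorem eq_a₂_of_mul_eq_none (hm : IsZeroDivisorOperation (HAdj U V) m)
    {c : Option (Fin 5 ⊕ U ⊕ V)} (hc : c ≠ none) (h₁ : m c a₁ = none) (h₂ : m c x₂ = none)
    (h₃ : m c a₂ = none ∨ m c a₃ = none) : c = a₂ := by
  refine (hm.eq_a₂_or_x₁_of_mul_eq_none hc h₁ h₂).resolve_right ?_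
  rintro rfl
  rcases h₃ with h | h <;> exact hm.mul_ne_none (by simp) (by simp) h

theorem eq_x₁_of_mul_eq_none (hm : IsZeroDivisorOperation (HAdj U V) m)
    {c : Option (Fin 5 ⊕ U ⊕ V)} (h₁ : m c a₁ = none) (h₂ : m c x₂ = none)
    (h₃ : m c a₃ ≠ none) : c = x₁ := by
  have hc : c ≠ none := by rintro rfl; exact h₃ (hm.none_mul _)
  refine (hm.eq_a₂_or_x₁_of_mul_eq_none hc h₁ h₂).resolve_left ?_
  rintro rfl
  exact h₃ (hm.mul_eq_none_of_hAdj (by simp))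

theorem eq_none_of_mul_eq_none (hm : IsZeroDivisorOperation (HAdj U V) m)
    {c : Option (Fin 5 ⊕ U ⊕ V)} (h₁ : m c a₁ = none) (h₂ : m c a₂ = none)
    (h₃ : m c x₁ = none) (h₄ : m c x₂ = none) : c = none := by
  by_contra hc
  rcases hm.eq_a₂_or_x₁_of_mul_eq_none hc h₁ h₄ with rfl | rfl
  · exact hm.mul_ne_none (by simp) (by simp) h₃
  · exact hm.mul_ne_none (by simp) (by simp) h₂

theorem eq_a₃_of_mul_eq_none (hm : IsZeroDivisorOperation (HAdj U V) m)
    {c : Option (Fin 5 ⊕ U ⊕ V)} (h₁ : m c a₁ = none) (h₂ : m c a₂ = none)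
    (h₃ : m c x₁ ≠ none) (h₄ : m c x₂ ≠ none) : c = a₃ := by
  have hc : c ≠ none := by rintro rfl; exact h₃ (hm.none_mul _)
  rcases hm.eq_a₁_or_a₂_or_a₃_of_mul_eq_none hc h₁ h₂ with rfl | rfl | rfl
  · exact absurd (hm.mul_eq_none_of_hAdj (by simp)) h₃
  · exact absurd (hm.mul_eq_none_of_hAdj (by simp)) h₄
  · rfl

theorem mul_a₃_x₁ (hm : IsZeroDivisorOperation (HAdj U V) m) : m a₃ x₁ = a₂ :=
  hm.eq_a₂_of_mul_eq_none (hm.mul_ne_none (by simp) (by simp))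
    (hm.mul_mul_eq_none_of_hAdj_left (by simp)) (hm.mul_mul_eq_none_of_hAdj_right (by simp))
    (.inl (hm.mul_mul_eq_none_of_hAdj_left (by simp)))

theorem mul_a₃_x₂ (hm : IsZeroDivisorOperation (HAdj U V) m) : m a₃ x₂ = a₁ :=
  eq_of_transportOp_eq mirrorEquiv hm.mirror.mul_a₃_x₁

theorem mul_x₁_v (hm : IsZeroDivisorOperation (HAdj U V) m) (v : V) :
    m x₁ (some (.inr (.inr v))) = a₂ :=
  hm.eq_a₂_of_mul_eq_none (hm.mul_ne_none (by simp) (by simp))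
    (hm.mul_mul_eq_none_of_hAdj_left (by simp)) (hm.mul_mul_eq_none_of_hAdj_left (by simp))
    (.inl (hm.mul_mul_eq_none_of_hAdj_right (by simp)))

theorem mul_x₂_u (hm : IsZeroDivisorOperation (HAdj U V) m) (u : U) :
    m x₂ (some (.inr (.inl u))) = a₁ :=
  eq_of_transportOp_eq mirrorEquiv (hm.mirror.mul_x₁_v u)

theorem mul_a₃_u (hm : IsZeroDivisorOperation (HAdj U V) m) (u : U) :
    m a₃ (some (.inr (.inl u))) = a₂ := by
  refine hm.eq_a₂_of_mul_eq_none (hm.mul_ne_none (by simp) (by simp))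
    (hm.mul_mul_eq_none_of_hAdj_left (by simp)) ?_
    (.inl (hm.mul_mul_eq_none_of_hAdj_left (by simp)))
  rw [hm.mul_assoc, hm.mul_comm _ x₂, hm.mul_x₂_u, hm.mul_eq_none_of_hAdj (by simp)]

theorem mul_a₃_v (hm : IsZeroDivisorOperation (HAdj U V) m) (v : V) :
    m a₃ (some (.inr (.inr v))) = a₁ :=
  eq_of_transportOp_eq mirrorEquiv (hm.mirror.mul_a₃_u v)

theorem mul_a₃_a₃ (hm : IsZeroDivisorOperation (HAdj U V) m) : m a₃ a₃ = none := by
  refine hm.eq_none_of_mul_eq_none (hm.mul_mul_eq_none_of_hAdj_left (by simp))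
    (hm.mul_mul_eq_none_of_hAdj_left (by simp)) ?_ ?_
  · rw [hm.mul_assoc, hm.mul_a₃_x₁, hm.mul_eq_none_of_hAdj (by simp)]
  · rw [hm.mul_assoc, hm.mul_a₃_x₂, hm.mul_eq_none_of_hAdj (by simp)]

theorem mul_a₂_x₁ (hm : IsZeroDivisorOperation (HAdj U V) m) : m a₂ x₁ = a₂ :=
  hm.eq_a₂_of_mul_eq_none (hm.mul_ne_none (by simp) (by simp))
    (hm.mul_mul_eq_none_of_hAdj_left (by simp)) (hm.mul_mul_eq_none_of_hAdj_left (by simp))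
    (.inr (hm.mul_mul_eq_none_of_hAdj_left (by simp)))

theorem mul_a₁_x₂ (hm : IsZeroDivisorOperation (HAdj U V) m) : m a₁ x₂ = a₁ :=
  eq_of_transportOp_eq mirrorEquiv hm.mirror.mul_a₂_x₁

theorem mul_a₂_u (hm : IsZeroDivisorOperation (HAdj U V) m) (u : U) :
    m a₂ (some (.inr (.inl u))) = a₂ :=
  hm.eq_a₂_of_mul_eq_none (hm.mul_ne_none (by simp) (by simp))
    (hm.mul_mul_eq_none_of_hAdj_right (by simp)) (hm.mul_mul_eq_none_of_hAdj_left (by simp))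
    (.inr (hm.mul_mul_eq_none_of_hAdj_left (by simp)))

theorem mul_a₁_v (hm : IsZeroDivisorOperation (HAdj U V) m) (v : V) :
    m a₁ (some (.inr (.inr v))) = a₁ :=
  eq_of_transportOp_eq mirrorEquiv (hm.mirror.mul_a₂_u v)

theorem mul_x₁_u (hm : IsZeroDivisorOperation (HAdj U V) m) (u : U) :
    m x₁ (some (.inr (.inl u))) = x₁ := by
  refine hm.eq_x₁_of_mul_eq_none (hm.mul_mul_eq_none_of_hAdj_left (by simp))
    (hm.mul_mul_eq_none_of_hAdj_left (by simp)) ?_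
  rw [hm.mul_assoc, hm.mul_comm _ a₃, hm.mul_a₃_u, hm.mul_comm, hm.mul_a₂_x₁]
  exact Option.some_ne_none _

theorem mul_x₂_v (hm : IsZeroDivisorOperation (HAdj U V) m) (v : V) :
    m x₂ (some (.inr (.inr v))) = x₂ :=
  eq_of_transportOp_eq mirrorEquiv (hm.mirror.mul_x₁_u v)

theorem mul_x₁_x₁ (hm : IsZeroDivisorOperation (HAdj U V) m) : m x₁ x₁ = x₁ := by
  refine hm.eq_x₁_of_mul_eq_none (hm.mul_mul_eq_none_of_hAdj_left (by simp))
    (hm.mul_mul_eq_none_of_hAdj_left (by simp)) ?_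
  rw [hm.mul_assoc, hm.mul_comm x₁ a₃, hm.mul_a₃_x₁, hm.mul_comm, hm.mul_a₂_x₁]
  exact Option.some_ne_none _

theorem mul_x₂_x₂ (hm : IsZeroDivisorOperation (HAdj U V) m) : m x₂ x₂ = x₂ :=
  eq_of_transportOp_eq mirrorEquiv hm.mirror.mul_x₁_x₁

theorem mul_u_u (hm : IsZeroDivisorOperation (HAdj U V) m) (u u' : U) :
    m (some (.inr (.inl u))) (some (.inr (.inl u'))) = x₁ := by
  refine hm.eq_x₁_of_mul_eq_none (hm.mul_mul_eq_none_of_hAdj_left (by simp)) ?_ ?_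
  · rw [hm.mul_assoc, hm.mul_comm _ x₂, hm.mul_x₂_u, hm.mul_comm,
      hm.mul_eq_none_of_hAdj (by simp)]
  · rw [hm.mul_assoc, hm.mul_comm _ a₃, hm.mul_a₃_u, hm.mul_comm, hm.mul_a₂_u]
    exact Option.some_ne_none _

theorem mul_v_v (hm : IsZeroDivisorOperation (HAdj U V) m) (v v' : V) :
    m (some (.inr (.inr v))) (some (.inr (.inr v'))) = x₂ :=
  eq_of_transportOp_eq mirrorEquiv (hm.mirror.mul_u_u v v')

theorem mul_u_v (hm : IsZeroDivisorOperation (HAdj U V) m) (u : U) (v : V) :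
    m (some (.inr (.inl u))) (some (.inr (.inr v))) = a₃ := by
  refine hm.eq_a₃_of_mul_eq_none (hm.mul_mul_eq_none_of_hAdj_left (by simp))
    (hm.mul_mul_eq_none_of_hAdj_right (by simp)) ?_ ?_
  · rw [hm.mul_assoc, hm.mul_comm _ x₁, hm.mul_x₁_v, hm.mul_comm, hm.mul_a₂_u]
    exact Option.some_ne_none _
  · rw [hm.mul_assoc, hm.mul_comm _ x₂, hm.mul_x₂_v, hm.mul_comm, hm.mul_x₂_u]
    exact Option.some_ne_none _

theorem mul_a₁_a₁ (hm : IsZeroDivisorOperation (HAdj U V) m) : m a₁ a₁ = none :=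
  calc m a₁ a₁ = m (m a₃ x₂) a₁ := by rw [hm.mul_a₃_x₂]
    _ = m a₃ (m x₂ a₁) := hm.mul_assoc _ _ _
    _ = m a₃ a₁ := by rw [hm.mul_comm x₂, hm.mul_a₁_x₂]
    _ = none := hm.mul_eq_none_of_hAdj (by simp)

theorem mul_a₂_a₂ (hm : IsZeroDivisorOperation (HAdj U V) m) : m a₂ a₂ = none :=
  eq_of_transportOp_eq mirrorEquiv hm.mirror.mul_a₁_a₁

theorem eq_pairMul (hm : IsZeroDivisorOperation (HAdj U V) m) : m = pairMul := by
  have hpair := isZeroDivisorOperation_pairMul (U := U) (V := V)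
  have hbase_u (i : Fin 5) (u : U) :
      m (some (.inl i)) (some (.inr (.inl u))) =
        pairMul (some (.inl i)) (some (.inr (.inl u))) := by
    fin_cases i
    exacts [hm.mul_eq_none_of_hAdj (by simp), hm.mul_a₂_u u, hm.mul_a₃_u u, hm.mul_x₁_u u,
      hm.mul_x₂_u u]
  have hbase_v (i : Fin 5) (v : V) :
      m (some (.inl i)) (some (.inr (.inr v))) =
        pairMul (some (.inl i)) (some (.inr (.inr v))) := by
    fin_cases i
    exacts [hm.mul_a₁_v v, hm.mul_eq_none_of_hAdj (by simp), hm.mul_a₃_v v, hm.mul_x₁_v v,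
      hm.mul_x₂_v v]
  funext a b
  rcases a with _ | p
  · rw [hm.none_mul, hpair.none_mul]
  rcases b with _ | q
  · rw [hm.mul_none, hpair.mul_none]
  rcases p with i | u | v <;> rcases q with j | u' | v'
  · fin_cases i <;> fin_cases j
    exacts [hm.mul_a₁_a₁, hm.mul_eq_none_of_hAdj (by simp), hm.mul_eq_none_of_hAdj (by simp),
      hm.mul_eq_none_of_hAdj (by simp), hm.mul_a₁_x₂,
      hm.mul_eq_none_of_hAdj (by simp), hm.mul_a₂_a₂, hm.mul_eq_none_of_hAdj (by simp),
      hm.mul_a₂_x₁, hm.mul_eq_none_of_hAdj (by simp),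
      hm.mul_eq_none_of_hAdj (by simp), hm.mul_eq_none_of_hAdj (by simp), hm.mul_a₃_a₃,
      hm.mul_a₃_x₁, hm.mul_a₃_x₂,
      hm.mul_eq_none_of_hAdj (by simp), (hm.mul_comm _ _).trans hm.mul_a₂_x₁,
      (hm.mul_comm _ _).trans hm.mul_a₃_x₁, hm.mul_x₁_x₁, hm.mul_eq_none_of_hAdj (by simp),
      (hm.mul_comm _ _).trans hm.mul_a₁_x₂, hm.mul_eq_none_of_hAdj (by simp),
      (hm.mul_comm _ _).trans hm.mul_a₃_x₂, hm.mul_eq_none_of_hAdj (by simp), hm.mul_x₂_x₂]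
  · exact hbase_u i u'
  · exact hbase_v i v'
  · rw [hm.mul_comm, hpair.mul_comm]; exact hbase_u j u
  · exact hm.mul_u_u u u'
  · exact hm.mul_u_v u v'
  · rw [hm.mul_comm, hpair.mul_comm]; exact hbase_v j v
  · rw [hm.mul_comm, hpair.mul_comm]; exact hm.mul_u_v u' v
  · exact hm.mul_v_v v v'

end IsZeroDivisorOperation

end Uniqueness

/-- Example 2.5(1): there is exactly one binary operation on `V(H) ∪ {0}` (modelled as
`Option (Fin 5 ⊕ U ⊕ V)`, with `none` playing the role of `0`) making it a commutative
semigroup with zero element `0` whose zero-divisor graph is `H`, i.e. such that for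
distinct `p, q ∈ V(H)`, `p · q = 0` iff `p` and `q` are adjacent in `H`. -/
theorem stmt5 (U V : Type u) :
    ∃! m : Option (Fin 5 ⊕ U ⊕ V) → Option (Fin 5 ⊕ U ⊕ V) → Option (Fin 5 ⊕ U ⊕ V),
      (∀ a b, m a b = m b a) ∧
      (∀ a b c, m (m a b) c = m a (m b c)) ∧
      (∀ a, m none a = none) ∧
      (∀ p q : Fin 5 ⊕ U ⊕ V, p ≠ q → (m (some p) (some q) = none ↔ HAdj U V p q)) :=
  ⟨pairMul, isZeroDivisorOperation_pairMul, fun _ hm => IsZeroDivisorOperation.eq_pairMul hm⟩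
end

section
/- Let S be a commutative semigroup with zero whose zero-divisor graph Γ(S) contains a cycle. Let x be a vertex of Γ(S) that is not an end vertex, and let T_x be the set of end vertices of Γ(S) adjacent to x. If x·x ≠ 0, then T_x ∪ {0} is a sub-semigroup of S. -/
universe u

variable {S : Type u} [CommSemigroupWithZero S] {x a b c z : S}

/-- The set `T_x` of the paper. -/
def endNeighbors (S : Type u) [CommSemigroupWithZero S] (x : S) : Set S :=
  {y | IsEndVertex S y ∧ (zdGraph S).Adj x y}

theorem IsEndVertex.eq_or_eq_of_mul_eq_zero_s8 (ha : IsEndVertex S a) (hax : (zdGraph S).Adj a x)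
    (hz : z ≠ 0) (haz : a * z = 0) : z = a ∨ z = x := by
  by_cases hza : z = a
  · exact Or.inl hza
  · exact Or.inr (ha.unique ⟨Ne.symm hza, haz, hax.2.2.1, hz⟩ hax)

theorem ne_of_mul_eq_zero_of_mul_self_ne_zero (hx2 : x * x ≠ 0) (hxy : x * a = 0) : a ≠ x := by
  rintro rfl
  exact hx2 hxy

theorem eq_of_adj_mul_of_mul_eq_zero (ha : a ∈ endNeighbors S x) (hx2 : x * x ≠ 0)
    (hc : (zdGraph S).Adj (a * b) c) (hac : a * c = 0) : c = x := by
  obtain ⟨hab_ne_c, habc, hab, hc0⟩ := hc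
  obtain ⟨ha, hxa⟩ := ha
  rcases ha.eq_or_eq_of_mul_eq_zero_s8 hxa.symm hc0 hac with hca | rfl
  · rw [hca] at habc hab_ne_c
    have h_aab : a * (a * b) = 0 := by rw [mul_comm]; exact habc
    rcases ha.eq_or_eq_of_mul_eq_zero_s8 hxa.symm hab h_aab with h | h
    · exact absurd h hab_ne_c
    · refine absurd h (ne_of_mul_eq_zero_of_mul_self_ne_zero hx2 ?_)
      rw [← mul_assoc, hxa.2.1, CommSemigroupWithZero.zero_mul']
  · rfl

theorem mul_self_eq_zero_of_mul_eq_of_mul_eq_or_eq (habc : a * b * c = 0) (hac : a * c = x)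
    (hbc : b * c = a ∨ b * c = x) : x * x = 0 := by
  rcases hbc with hbc | hbc
  · have haa : a * a = 0 := by
      calc a * a = a * (b * c) := by rw [hbc]
        _ = 0 := by rw [← mul_assoc, habc]
    calc x * x = a * a * (c * c) := by rw [← hac]; ac_rfl
      _ = 0 := by rw [haa, CommSemigroupWithZero.zero_mul']
  · calc x * x = a * c * (b * c) := by rw [hac, hbc]
      _ = a * b * c * c := by ac_rfl
      _ = 0 := by rw [habc, CommSemigroupWithZero.zero_mul']

theorem eq_of_adj_mul (ha : a ∈ endNeighbors S x) (hb : b ∈ endNeighbors S x)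
    (hx2 : x * x ≠ 0) (hc : (zdGraph S).Adj (a * b) c) : c = x := by
  have habc : a * b * c = 0 := hc.2.1
  by_cases hac : a * c = 0
  · exact eq_of_adj_mul_of_mul_eq_zero ha hx2 hc hac
  by_cases hbc : b * c = 0
  · exact eq_of_adj_mul_of_mul_eq_zero hb hx2 (mul_comm a b ▸ hc) hbc
  have hac' : a * c = b ∨ a * c = x :=
    hb.1.eq_or_eq_of_mul_eq_zero_s8 hb.2.symm hac (by rw [← habc]; ac_rfl)
  have hbc' : b * c = a ∨ b * c = x :=
    ha.1.eq_or_eq_of_mul_eq_zero_s8 ha.2.symm hbc (by rw [← habc]; ac_rfl)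
  exfalso
  rcases hac' with hac' | hac'
  · rcases hbc' with hbc' | hbc'
    · apply hc.2.2.1
      calc a * b = b * c * (a * c) := by rw [hac', hbc']
        _ = a * b * c * c := by ac_rfl
        _ = 0 := by rw [habc, CommSemigroupWithZero.zero_mul']
    · have hbac : b * a * c = 0 := by rwa [mul_comm b]
      exact hx2 (mul_self_eq_zero_of_mul_eq_of_mul_eq_or_eq hbac hbc' (Or.inl hac'))
  · exact hx2 (mul_self_eq_zero_of_mul_eq_of_mul_eq_or_eq habc hac' hbc')

theorem mul_mem_endNeighbors_union_zero (ha : a ∈ endNeighbors S x) (hb : b ∈ endNeighbors S x)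
    (hx2 : x * x ≠ 0) : a * b ∈ endNeighbors S x ∪ {0} := by
  by_cases hab : a * b = 0
  · exact Or.inr hab
  have hxab : (zdGraph S).Adj x (a * b) := by
    refine ⟨(ne_of_mul_eq_zero_of_mul_self_ne_zero hx2 ?_).symm, ?_, ha.2.2.2.1, hab⟩ <;>
      rw [← mul_assoc, ha.2.2.1, CommSemigroupWithZero.zero_mul']
  exact Or.inl ⟨⟨x, hxab.symm, fun c hc => eq_of_adj_mul ha hb hx2 hc⟩, hxab⟩

theorem stmt8_general (S : Type u) [CommSemigroupWithZero S] (x : S)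
    (hx2 : x * x ≠ 0) :
    ∀ a ∈ {y : S | IsEndVertex S y ∧ (zdGraph S).Adj x y} ∪ {0},
      ∀ b ∈ {y : S | IsEndVertex S y ∧ (zdGraph S).Adj x y} ∪ {0},
        a * b ∈ {y : S | IsEndVertex S y ∧ (zdGraph S).Adj x y} ∪ {0} := by
  rintro a (ha | rfl) b (hb | rfl)
  · exact mul_mem_endNeighbors_union_zero ha hb hx2
  · exact Or.inr (mul_comm a 0 ▸ CommSemigroupWithZero.zero_mul' a)
  all_goals exact Or.inr (CommSemigroupWithZero.zero_mul' _)

/-- Proposition 2.7: if `Γ(S)` has a cycle, `x` is a vertex which is not an end vertex,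
and `x * x ≠ 0`, then `T_x ∪ {0}` (where `T_x` is the set of end vertices adjacent to `x`)
is a sub-semigroup of `S`. -/
theorem stmt8 (S : Type u) [CommSemigroupWithZero S] (x : S)
    (hx : IsVertex S x) (hxe : ¬ IsEndVertex S x)
    (hcyc : ¬ (zdGraph S).IsAcyclic)
    (hx2 : x * x ≠ 0) :
    ∀ a ∈ {y : S | IsEndVertex S y ∧ (zdGraph S).Adj x y} ∪ {0},
      ∀ b ∈ {y : S | IsEndVertex S y ∧ (zdGraph S).Adj x y} ∪ {0},
        a * b ∈ {y : S | IsEndVertex S y ∧ (zdGraph S).Adj x y} ∪ {0} :=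
  stmt8_general S x hx2
end

section
/- Let S be a Boolean semigroup with zero element 0 (a commutative semigroup with zero in which x·x = x for all x). For a nonzero x ∈ S, let N(x) = {z ∈ S : z ≠ 0, z ≠ x, z·x = 0}, S_x = {y ∈ S : y ≠ 0 and N(y) = N(x)}, and S_{≤x} = {y ∈ S : y ≠ 0 and N(y) ⊆ N(x)}. Then S_{≤x} is a sub-semigroup of S with 0 ∉ S_{≤x}, and S_x is an ideal of S_{≤x}: for all y ∈ S_x and z ∈ S_{≤x}, y·z ∈ S_x. -/
universe u v w
/-- The neighbourhood of `x` in the zero-divisor graph of `S`. -/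
def Nset (S : Type u) [CommSemigroupWithZero S] (x : S) : Set S :=
  {z : S | z ≠ 0 ∧ z ≠ x ∧ z * x = 0}

/-!
In a Boolean semigroup a nonzero element is never its own neighbour, so `N(y) ⊆ N(x)` says
exactly that every annihilator of `y` annihilates `x`. Closure of `S_{≤x}` under products is then
a computation with idempotents: if `w y z = 0` then `(w y) x = 0`, i.e. `(w x) y = 0`, hence
`w x = (w x) x = 0`; and `y z = 0` would give `y x = 0`, then `x x = 0`. Finally
`N(y) ⊆ N(y z)`, which makes `S_x` an ideal of `S_{≤x}`.
-/

namespace Nset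

variable {S : Type u} [CommSemigroupWithZero S]

theorem mem_iff (hB : ∀ x : S, x * x = x) {y z : S} :
    z ∈ Nset S y ↔ z ≠ 0 ∧ z * y = 0 := by
  refine ⟨fun ⟨hz, _, hzy⟩ => ⟨hz, hzy⟩, fun ⟨hz, hzy⟩ => ⟨hz, ?_, hzy⟩⟩
  rintro rfl
  exact hz (by rwa [hB] at hzy)

theorem subset_iff (hB : ∀ x : S, x * x = x) {x y : S} :
    Nset S y ⊆ Nset S x ↔ ∀ w, w * y = 0 → w * x = 0 := by
  simp only [Set.subset_def, mem_iff hB]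
  refine ⟨fun h w hwy => ?_, fun h w ⟨hw, hwy⟩ => ⟨hw, h w hwy⟩⟩
  by_cases hw : w = 0
  · rw [hw, CommSemigroupWithZero.zero_mul']
  · exact (h w ⟨hw, hwy⟩).2

theorem subset_mul (hB : ∀ x : S, x * x = x) (y z : S) : Nset S y ⊆ Nset S (y * z) := by
  rw [subset_iff hB]
  intro w hwy
  rw [← mul_assoc, hwy, CommSemigroupWithZero.zero_mul']

theorem mul_subset (hB : ∀ x : S, x * x = x) {x y z : S}
    (hy : Nset S y ⊆ Nset S x) (hz : Nset S z ⊆ Nset S x) : Nset S (y * z) ⊆ Nset S x := by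
  rw [subset_iff hB] at hy hz ⊢
  intro w hwyz
  have hwyx : w * x * y = 0 := by
    rw [mul_right_comm]
    exact hz _ (by rw [mul_assoc, hwyz])
  simpa only [mul_assoc, hB] using hy _ hwyx

theorem mul_ne_zero_of_subset (hB : ∀ x : S, x * x = x) {x y z : S} (hx : x ≠ 0)
    (hy : Nset S y ⊆ Nset S x) (hz : Nset S z ⊆ Nset S x) : y * z ≠ 0 := by
  rw [subset_iff hB] at hy hz
  intro hyz
  have hxy : x * y = 0 := by rw [mul_comm]; exact hz y hyz
  exact hx (by simpa only [hB] using hy x hxy)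

end Nset

/-- Theorem 3.2(2): in a Boolean semigroup `S`, for nonzero `x` the set
`S_{≤x} = {y ≠ 0 | N(y) ⊆ N(x)}` is a sub-semigroup of `S` not containing `0`, and
`S_x = {y ≠ 0 | N(y) = N(x)}` is an ideal of `S_{≤x}`. -/
theorem stmt14 (S : Type u) [CommSemigroupWithZero S] (hB : ∀ x : S, x * x = x)
    (x : S) (hx : x ≠ 0) :
    (∀ y ∈ {y : S | y ≠ 0 ∧ Nset S y ⊆ Nset S x},
      ∀ z ∈ {y : S | y ≠ 0 ∧ Nset S y ⊆ Nset S x},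
        y * z ∈ {y : S | y ≠ 0 ∧ Nset S y ⊆ Nset S x}) ∧
    (0 : S) ∉ {y : S | y ≠ 0 ∧ Nset S y ⊆ Nset S x} ∧
    (∀ y ∈ {y : S | y ≠ 0 ∧ Nset S y = Nset S x},
      ∀ z ∈ {y : S | y ≠ 0 ∧ Nset S y ⊆ Nset S x},
        y * z ∈ {y : S | y ≠ 0 ∧ Nset S y = Nset S x}) := by
  refine ⟨?_, fun h => h.1 rfl, ?_⟩
  · rintro y ⟨-, hy⟩ z ⟨-, hz⟩
    exact ⟨Nset.mul_ne_zero_of_subset hB hx hy hz, Nset.mul_subset hB hy hz⟩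
  · rintro y ⟨-, hy⟩ z ⟨-, hz⟩
    refine ⟨Nset.mul_ne_zero_of_subset hB hx hy.subset hz, ?_⟩
    exact (Nset.mul_subset hB hy.subset hz).antisymm (hy ▸ Nset.subset_mul hB y z)
end

section
/- Let S be a Boolean semigroup with zero element 0 (a commutative semigroup with zero in which x·x = x for all x), and for x ∈ S let N(x) = {z ∈ S : z ≠ 0, z ≠ x, z·x = 0}. Then the following are equivalent: (i) for all nonzero x, y ∈ S, N(x) = N(y) implies x = y (the zero-divisor graph of S is uniquely determined); (ii) for all nonzero x, y ∈ S, N(y) ⊆ N(x) implies y·x = x. -/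
/-!
In a Boolean semigroup `N(x)` is the set of nonzero annihilators of `x`. If `N(y) ⊆ N(x)` and
`z` kills `x * y`, then `z * x` kills `y`; were it nonzero, it would lie in `N(y) ⊆ N(x)`, giving
`z * x = (z * x) * x = 0`. Hence `N(x * y) = N(x)`, where `x * y ≠ 0` because otherwise
`x ∈ N(y) ⊆ N(x)`, and uniqueness of neighbourhoods gives `x = x * y`.
-/

universe u v w
section BooleanSemigroup

variable {S : Type u} [CommSemigroupWithZero S]

/- Since `x * x = 0` forces `x = 0`, the condition `z ≠ x` in `Nset` is automatic. -/
theorem mem_Nset_iff_of_idem (hB : ∀ x : S, x * x = x) {x z : S} :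
    z ∈ Nset S x ↔ z ≠ 0 ∧ z * x = 0 := by
  refine ⟨fun ⟨hz, _, hzx⟩ => ⟨hz, hzx⟩, fun ⟨hz, hzx⟩ => ⟨hz, ?_, hzx⟩⟩
  rintro rfl
  exact hz ((hB z).symm.trans hzx)

theorem Nset_subset_Nset_mul (hB : ∀ x : S, x * x = x) (x y : S) :
    Nset S x ⊆ Nset S (x * y) := by
  intro z hz
  rw [mem_Nset_iff_of_idem hB] at hz ⊢
  exact ⟨hz.1, by rw [← mul_assoc, hz.2, CommSemigroupWithZero.zero_mul']⟩

theorem Nset_mul_subset_of_Nset_subset (hB : ∀ x : S, x * x = x) {x y : S}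
    (hyx : Nset S y ⊆ Nset S x) : Nset S (x * y) ⊆ Nset S x := by
  intro z hz
  rw [mem_Nset_iff_of_idem hB] at hz ⊢
  refine ⟨hz.1, ?_⟩
  by_contra hzx
  have hzxy : z * x ∈ Nset S y := (mem_Nset_iff_of_idem hB).2 ⟨hzx, by rw [mul_assoc, hz.2]⟩
  have hzxx := ((mem_Nset_iff_of_idem hB).1 (hyx hzxy)).2
  rw [mul_assoc, hB] at hzxx
  exact hzx hzxx

theorem Nset_mul_eq_of_Nset_subset (hB : ∀ x : S, x * x = x) {x y : S}
    (hyx : Nset S y ⊆ Nset S x) : Nset S x = Nset S (x * y) :=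
  (Nset_subset_Nset_mul hB x y).antisymm (Nset_mul_subset_of_Nset_subset hB hyx)

theorem mul_ne_zero_of_Nset_subset (hB : ∀ x : S, x * x = x) {x y : S} (hx : x ≠ 0)
    (hyx : Nset S y ⊆ Nset S x) : x * y ≠ 0 := by
  intro hxy
  have hxNx := hyx ((mem_Nset_iff_of_idem hB).2 ⟨hx, hxy⟩)
  exact hx ((hB x).symm.trans ((mem_Nset_iff_of_idem hB).1 hxNx).2)

end BooleanSemigroup

/-- Corollary 3.3: for a Boolean semigroup `S`, the zero-divisor graph `Γ(S)` is uniquely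
determined (by neighbourhoods) iff `N(y) ⊆ N(x)` implies `y * x = x` for all nonzero
`x, y ∈ S`. -/
theorem stmt15 (S : Type u) [CommSemigroupWithZero S] (hB : ∀ x : S, x * x = x) :
    (∀ x y : S, x ≠ 0 → y ≠ 0 → Nset S x = Nset S y → x = y) ↔
    (∀ x y : S, x ≠ 0 → y ≠ 0 → Nset S y ⊆ Nset S x → y * x = x) := by
  constructor
  · intro huniq x y hx _ hyx
    have hxy : x = x * y :=
      huniq x (x * y) hx (mul_ne_zero_of_Nset_subset hB hx hyx)
        (Nset_mul_eq_of_Nset_subset hB hyx)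
    rw [mul_comm, ← hxy]
  · intro hdom x y hx hy hxy
    calc x = y * x := (hdom x y hx hy hxy.symm.subset).symm
      _ = x * y := mul_comm y x
      _ = y := hdom y x hy hx hxy.subset
end

section
/- Let S be a commutative semigroup with zero in which every element is a zero-divisor (for every x ∈ S there exists a nonzero y ∈ S with x·y = 0) and which is reduced (x·x = 0 implies x = 0, equivalently S has no nonzero nilpotent elements). For x ∈ S let N(x) = {z ∈ S : z ≠ 0, z ≠ x, z·x = 0}. If the zero-divisor graph of S is uniquely determined, i.e., N(x) = N(y) implies x = y for all nonzero x, y ∈ S, then S is a Boolean semigroup: x·x = x for every x ∈ S. -/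
universe u v w
section Reduced

variable {S : Type u} [CommSemigroupWithZero S] (hred : ∀ x : S, x * x = 0 → x = 0)
include hred

theorem mul_mul_self_eq_zero_iff_of_reduced (z x : S) : z * (x * x) = 0 ↔ z * x = 0 := by
  constructor
  · intro h
    apply hred
    calc z * x * (z * x) = z * (z * (x * x)) := by ac_rfl
      _ = 0 := by rw [h, mul_comm, CommSemigroupWithZero.zero_mul']
  · intro h
    rw [← mul_assoc, h, CommSemigroupWithZero.zero_mul']

/-- In a reduced semigroup `x` is never its own neighbour, so the condition `z ≠ x` in `Nset`
is automatic. -/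
theorem Nset_eq_of_reduced {x : S} (hx : x ≠ 0) : Nset S x = {z | z ≠ 0 ∧ z * x = 0} := by
  ext z
  refine ⟨fun ⟨hz, _, hzx⟩ => ⟨hz, hzx⟩, fun ⟨hz, hzx⟩ => ⟨hz, ?_, hzx⟩⟩
  rintro rfl
  exact hx (hred z hzx)

theorem Nset_mul_self_of_reduced {x : S} (hx : x ≠ 0) : Nset S (x * x) = Nset S x := by
  have hxx : x * x ≠ 0 := fun h => hx (hred x h)
  simp only [Nset_eq_of_reduced hred hx, Nset_eq_of_reduced hred hxx,
    mul_mul_self_eq_zero_iff_of_reduced hred]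

end Reduced

theorem stmt18_general (S : Type u) [CommSemigroupWithZero S]
    (hred : ∀ x : S, x * x = 0 → x = 0)
    (hud : ∀ x y : S, x ≠ 0 → y ≠ 0 → Nset S x = Nset S y → x = y) :
    ∀ x : S, x * x = x := by
  intro x
  by_cases hx : x = 0
  · rw [hx]
    exact CommSemigroupWithZero.zero_mul' 0
  exact hud _ _ (fun h => hx (hred x h)) hx (Nset_mul_self_of_reduced hred hx)

/-- Proposition 3.6: a reduced commutative semigroup with zero all of whose elements are
zero-divisors, whose zero-divisor graph is uniquely determined, is a Boolean semigroup. -/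
theorem stmt18 (S : Type u) [CommSemigroupWithZero S]
    (hzd : ∀ x : S, ∃ y : S, y ≠ 0 ∧ x * y = 0)
    (hred : ∀ x : S, x * x = 0 → x = 0)
    (hud : ∀ x y : S, x ≠ 0 → y ≠ 0 → Nset S x = Nset S y → x = y) :
    ∀ x : S, x * x = x :=
  stmt18_general S hred hud
end
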